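/- There exists a C^∞ function f : ℝ → ℝ with f(t) ≥ 0 for all t such that for every α ∈ (0, 1] there is no differentiable function g : ℝ → ℝ with g(t)² = f(t) for all t whose derivative g' is locally α-Hölder continuous. In other words, a C^∞ curve in the orbit space of the representation of ℤ/2ℤ on ℝ by x ↦ -x does in general not admit a lift of class C^{1,α} for any α > 0. -/

import Mathlib

/-!
Let `φ` be a smooth cutoff equal to `1` on `[-1, 1]` and vanishing outside `(-2, 2)`, and put
`cₙ = 2⁻ⁿ`, `wₙ = cₙ / 16`, `aₙ = 2^(-n²)`, `eₙ = 2^(-n³)`. The function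
`f t = ∑ₙ aₙ² (((t - cₙ) / wₙ)² + eₙ²) φ ((t - cₙ) / wₙ)` is a sum of bumps with disjoint supports
accumulating at `0`; it is `C^∞` because `aₙ` decays faster than any power of `wₙ`.

Near `cₙ` we have `f t = kₙ² ((t - cₙ)² + εₙ²)` with `kₙ = aₙ / wₙ` and `εₙ = eₙ wₙ`. A
differentiable square root of this positive function does not change sign, so it is even about
`cₙ`, and `2 g g' = f'` shows that `g'` changes by `√2 kₙ` between `cₙ - εₙ` and `cₙ + εₙ`.
An `α`-Hölder bound on `g'` would give `kₙ ≤ C (2 εₙ)^α`, which fails for large `n` since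
`eₙ^α ≤ aₙ²` once `n α ≥ 2`.
-/

open Filter Metric Topology

theorem two_mul_mul_deriv_eq_of_sq_eventuallyEq {g q : ℝ → ℝ} {x q' : ℝ}
    (hg : DifferentiableAt ℝ g x) (hq : HasDerivAt q q' x) (hgq : (fun y => g y ^ 2) =ᶠ[𝓝 x] q) :
    2 * g x * deriv g x = q' := by
  simpa using ((hg.hasDerivAt.pow 2).congr_of_eventuallyEq hgq.symm).unique hq

theorem sq_deriv_sub_eq_of_sq_eq {g : ℝ → ℝ} {c r ε k : ℝ} (hk : k ≠ 0) (hε : ε ≠ 0)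
    (hεr : |ε| < r) (hg : DifferentiableOn ℝ g (ball c r))
    (hsq : ∀ x ∈ ball c r, g x ^ 2 = k ^ 2 * ((x - c) ^ 2 + ε ^ 2)) :
    (deriv g (c + ε) - deriv g (c - ε)) ^ 2 = 2 * k ^ 2 := by
  have hg_ne : ∀ x ∈ ball c r, g x ≠ 0 := fun x hx => by
    rw [← pow_ne_zero_iff two_ne_zero, hsq x hx]
    positivity
  have hreflect : ∀ x ∈ ball c r, 2 * c - x ∈ ball c r := fun x hx => by
    rw [mem_ball, Real.dist_eq] at hx ⊢
    rwa [show 2 * c - x - c = -(x - c) by ring, abs_neg]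
  -- `g` and its reflection in `c` are nonvanishing square roots of the same even function.
  have hsymm : Set.EqOn g (fun x => g (2 * c - x)) (ball c r) := by
    refine (convex_ball c r).isPreconnected.eq_of_sq_eq hg.continuousOn
      (hg.continuousOn.comp (by fun_prop) hreflect) (fun x hx => ?_)
      (fun hx => hg_ne _ (hreflect _ hx)) (mem_ball_self ((abs_nonneg ε).trans_lt hεr))
      (congrArg g (by ring))
    simp only [Pi.pow_apply, hsq x hx, hsq _ (hreflect x hx)]
    ring
  have hmem : ∀ {δ : ℝ}, |δ| < r → c + δ ∈ ball c r := fun h => by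
    rwa [mem_ball, Real.dist_eq, add_sub_cancel_left]
  have hderiv : ∀ {δ : ℝ}, |δ| < r → 2 * g (c + δ) * deriv g (c + δ) = k ^ 2 * (2 * δ) := by
    intro δ hδ
    refine two_mul_mul_deriv_eq_of_sq_eventuallyEq
      (hg.differentiableAt (isOpen_ball.mem_nhds (hmem hδ)))
      (q := fun x => k ^ 2 * ((x - c) ^ 2 + ε ^ 2)) ?_
      (eventually_of_mem (isOpen_ball.mem_nhds (hmem hδ)) hsq)
    refine ((((hasDerivAt_id' _).sub_const c).fun_pow 2).add_const (ε ^ 2)).const_mul (k ^ 2)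
      |>.congr_deriv ?_
    simp
  have hplus := hderiv hεr
  have hminus := hderiv (δ := -ε) (by rwa [abs_neg])
  have hgeq : g (c + ε) = g (c - ε) := by
    simpa [show 2 * c - (c + ε) = c - ε by ring] using hsymm (hmem hεr)
  rw [← sub_eq_add_neg, ← hgeq] at hminus
  have hval : g (c + ε) ^ 2 = 2 * k ^ 2 * ε ^ 2 := by
    rw [hsq _ (hmem hεr), add_sub_cancel_left]; ring
  set Δ := deriv g (c + ε) - deriv g (c - ε)
  have hprod : 2 * g (c + ε) * Δ = 4 * k ^ 2 * ε := by linear_combination hplus - hminus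
  refine mul_left_cancel₀ (show 8 * k ^ 2 * ε ^ 2 ≠ 0 by positivity) ?_
  linear_combination (2 * g (c + ε) * Δ + 4 * k ^ 2 * ε) * hprod - 4 * Δ ^ 2 * hval

theorem iteratedDeriv_comp_sub_div {𝕜 : Type*} [NontriviallyNormedField 𝕜] {f : 𝕜 → 𝕜} {k : ℕ}
    (hf : ContDiff 𝕜 k f) (c w x : 𝕜) :
    iteratedDeriv k (fun t => f ((t - c) / w)) x = w⁻¹ ^ k * iteratedDeriv k f ((x - c) / w) := by
  have h := congrFun (iteratedDeriv_comp_sub_const k (fun y => f (w⁻¹ * y)) c) x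
  simp only [iteratedDeriv_comp_const_mul hf] at h
  simpa only [div_eq_inv_mul] using h

theorem contDiff_tsum_mul_comp_div {h : ℝ → ℝ} (hh : ContDiff ℝ (⊤ : ℕ∞) h)
    (hcs : HasCompactSupport h) {b c w : ℕ → ℝ}
    (hsum : ∀ k : ℕ, Summable fun n => |b n| * |w n|⁻¹ ^ k) :
    ContDiff ℝ (⊤ : ℕ∞) fun t => ∑' n, b n * h ((t - c n) / w n) := by
  have hhk (k : ℕ) : ContDiff ℝ k h := hh.of_le (by exact_mod_cast le_top)
  choose B hB using fun k : ℕ => ((hhk k).continuous_iteratedFDeriv le_rfl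
    ).bounded_above_of_compact_support (hcs.iteratedFDeriv k)
  refine contDiff_tsum (v := fun k n => |b n| * |w n|⁻¹ ^ k * B k) (fun n => ?_)
    (fun k _ => (hsum k).mul_right _) (fun k n x _ => ?_)
  · exact contDiff_const.mul (hh.comp ((contDiff_id.sub contDiff_const).div_const _))
  · have hBk := hB k ((x - c n) / w n)
    rw [norm_iteratedFDeriv_eq_norm_iteratedDeriv] at hBk ⊢
    rw [iteratedDeriv_const_mul_field, iteratedDeriv_comp_sub_div (hhk k), norm_mul, norm_mul,
      norm_pow, norm_inv, Real.norm_eq_abs, Real.norm_eq_abs, mul_assoc]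
    gcongr

noncomputable section

namespace NoC1AlphaLift

def cutoff : ContDiffBump (0 : ℝ) := ⟨1, 2, one_pos, one_lt_two⟩

def center (n : ℕ) : ℝ := (2 ^ n)⁻¹

def width (n : ℕ) : ℝ := center n / 16

def amplitude (n : ℕ) : ℝ := (2 ^ n ^ 2)⁻¹

def gap (n : ℕ) : ℝ := (2 ^ n ^ 3)⁻¹

theorem cutoff_eq_one {x : ℝ} (hx : |x| ≤ 1) : cutoff x = 1 :=
  cutoff.one_of_mem_closedBall (by simpa [cutoff] using hx)

theorem cutoff_eq_zero {x : ℝ} (hx : 2 ≤ |x|) : cutoff x = 0 :=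
  cutoff.zero_of_le_dist (by simpa [cutoff] using hx)

theorem center_pos (n : ℕ) : 0 < center n := by unfold center; positivity

theorem width_pos (n : ℕ) : 0 < width n := by have := center_pos n; unfold width; positivity

theorem amplitude_pos (n : ℕ) : 0 < amplitude n := by unfold amplitude; positivity

theorem gap_pos (n : ℕ) : 0 < gap n := by unfold gap; positivity

theorem center_le_half {m n : ℕ} (h : m < n) : center n ≤ center m / 2 := by
  rw [center, center, ← inv_pow, ← inv_pow, div_eq_mul_inv, ← pow_succ]
  exact pow_le_pow_of_le_one (by norm_num) (by norm_num) h

theorem center_le_one (n : ℕ) : center n ≤ 1 :=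
  inv_le_one_of_one_le₀ (one_le_pow₀ one_le_two)

theorem width_le (n : ℕ) : width n ≤ 16⁻¹ := by
  rw [width, div_eq_mul_inv]
  exact mul_le_of_le_one_left (by norm_num) (center_le_one n)

theorem gap_le_one (n : ℕ) : gap n ≤ 1 :=
  inv_le_one_of_one_le₀ (one_le_pow₀ one_le_two)

theorem gap_lt_one {n : ℕ} (hn : n ≠ 0) : gap n < 1 :=
  inv_lt_one_of_one_lt₀ (one_lt_pow₀ one_lt_two (pow_ne_zero 3 hn))

theorem inv_width (n : ℕ) : (width n)⁻¹ = 16 * 2 ^ n := by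
  rw [width, center, inv_div, div_inv_eq_mul]

theorem summable_amplitude_sq_mul_inv_width_pow (k : ℕ) :
    Summable fun n => amplitude n ^ 2 * (width n)⁻¹ ^ k := by
  refine (summable_geometric_two.mul_left (16 ^ k)).of_norm_bounded_eventually_nat ?_
  filter_upwards [eventually_ge_atTop (k + 1)] with n hn
  have hexp : (2 : ℝ) ^ n * (2 ^ n) ^ k ≤ (2 ^ n ^ 2) ^ 2 := by
    rw [← pow_mul, ← pow_add, ← pow_mul]
    exact pow_le_pow_right₀ one_le_two (by nlinarith)
  rw [Real.norm_of_nonneg (by positivity [amplitude_pos n, width_pos n]), amplitude, inv_width,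
    mul_pow, one_div, inv_pow, inv_pow]
  field_simp
  exact hexp

theorem gap_rpow_le_amplitude_sq {α : ℝ} {n : ℕ} (hn : 2 ≤ n * α) :
    gap n ^ α ≤ amplitude n ^ 2 := by
  rw [gap, amplitude, Real.inv_rpow (by positivity), ← Real.rpow_natCast,
    ← Real.rpow_mul zero_le_two, inv_pow, ← pow_mul, ← Real.rpow_natCast]
  refine inv_anti₀ (by positivity) (Real.rpow_le_rpow_of_exponent_le one_le_two ?_)
  push_cast
  nlinarith [sq_nonneg (n : ℝ)]

theorem mul_rpow_lt_amplitude_div_width {α C : ℝ} {n : ℕ} (hα : 0 < α) (hnα : 2 / α < n)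
    (hnC : C < n) : C * (2 * (gap n * width n)) ^ α < amplitude n / width n := by
  have ha := amplitude_pos n
  have hw := width_pos n
  have he := gap_pos n
  have hRHS : amplitude n ≤ amplitude n / width n :=
    le_div_self ha.le hw ((width_le n).trans (by norm_num))
  rcases le_or_gt C 0 with hC | hC
  · exact (mul_nonpos_of_nonpos_of_nonneg hC (by positivity)).trans_lt (ha.trans_le hRHS)
  have hCa : C * amplitude n < 1 := by
    rw [amplitude, mul_inv_lt_iff₀ (by positivity), one_mul]
    calc C < n := hnC
      _ < 2 ^ n := by exact_mod_cast Nat.lt_two_pow_self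
      _ ≤ 2 ^ n ^ 2 := pow_le_pow_right₀ one_le_two (Nat.le_self_pow two_ne_zero n)
  have hgap : 2 * (gap n * width n) ≤ gap n := by
    have := width_le n
    nlinarith
  calc C * (2 * (gap n * width n)) ^ α ≤ C * gap n ^ α := by gcongr
    _ ≤ C * amplitude n ^ 2 := by
        gcongr
        exact gap_rpow_le_amplitude_sq (by rw [div_lt_iff₀ hα] at hnα; linarith)
    _ < amplitude n := by nlinarith
    _ ≤ amplitude n / width n := hRHS

def bumpSeries (h : ℝ → ℝ) (b : ℕ → ℝ) (t : ℝ) : ℝ :=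
  ∑' n, b n * h ((t - center n) / width n)

-- The `n`-th bump is `aₙ² (x² + eₙ²) φ x` at `x = (t - cₙ) / wₙ`, split into two series with
-- fixed compactly supported profiles.
def curve : ℝ → ℝ :=
  bumpSeries (fun x => x ^ 2 * cutoff x) (fun n => amplitude n ^ 2) +
    bumpSeries cutoff (fun n => (amplitude n * gap n) ^ 2)

theorem two_le_abs_sub_center_div_width {m n : ℕ} (hmn : m ≠ n) {x : ℝ}
    (hx : x ∈ ball (center n) (width n)) : 2 ≤ |(x - center m) / width m| := by
  rw [abs_div, abs_of_pos (width_pos m), le_div_iff₀ (width_pos m)]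
  rw [mem_ball, Real.dist_eq, abs_lt] at hx
  have := center_pos m
  unfold width at *
  rcases hmn.lt_or_gt with h | h
  · have := center_le_half h
    exact le_abs.2 (Or.inr (by linarith))
  · have := center_le_half h
    exact le_abs.2 (Or.inl (by linarith))

theorem bumpSeries_eq_of_mem_ball {h : ℝ → ℝ} (hh : ∀ x, 2 ≤ |x| → h x = 0) (b : ℕ → ℝ) {n : ℕ}
    {x : ℝ} (hx : x ∈ ball (center n) (width n)) :
    bumpSeries h b x = b n * h ((x - center n) / width n) :=
  tsum_eq_single n fun m hm => by rw [hh _ (two_le_abs_sub_center_div_width hm hx), mul_zero]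

theorem contDiff_bumpSeries {h : ℝ → ℝ} (hh : ContDiff ℝ (⊤ : ℕ∞) h) (hcs : HasCompactSupport h)
    {b : ℕ → ℝ} (hb : ∀ n, |b n| ≤ amplitude n ^ 2) : ContDiff ℝ (⊤ : ℕ∞) (bumpSeries h b) :=
  contDiff_tsum_mul_comp_div hh hcs fun k =>
    (summable_amplitude_sq_mul_inv_width_pow k).of_nonneg_of_le (fun n => by positivity)
      fun n => by
        rw [abs_of_pos (width_pos n)]
        exact mul_le_mul_of_nonneg_right (hb n) (pow_nonneg (inv_pos.2 (width_pos n)).le k)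

theorem contDiff_curve : ContDiff ℝ (⊤ : ℕ∞) curve := by
  refine (contDiff_bumpSeries ((contDiff_id.pow 2).mul cutoff.contDiff)
    (cutoff.hasCompactSupport.mul_left) fun n => (abs_of_nonneg (sq_nonneg _)).le).add
    (contDiff_bumpSeries cutoff.contDiff cutoff.hasCompactSupport fun n => ?_)
  rw [abs_of_nonneg (sq_nonneg _)]
  exact pow_le_pow_left₀ (mul_pos (amplitude_pos n) (gap_pos n)).le
    (mul_le_of_le_one_right (amplitude_pos n).le (gap_le_one n)) 2

theorem curve_nonneg (t : ℝ) : 0 ≤ curve t :=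
  add_nonneg (tsum_nonneg fun n => by positivity [cutoff.nonneg' ((t - center n) / width n)])
    (tsum_nonneg fun n => by positivity [cutoff.nonneg' ((t - center n) / width n)])

theorem curve_eq_of_mem_ball {n : ℕ} {x : ℝ} (hx : x ∈ ball (center n) (width n)) :
    curve x = (amplitude n / width n) ^ 2 * ((x - center n) ^ 2 + (gap n * width n) ^ 2) := by
  have hw := (width_pos n).ne'
  have hcut : cutoff ((x - center n) / width n) = 1 := by
    refine cutoff_eq_one ?_
    rw [mem_ball, Real.dist_eq] at hx
    rw [abs_div, abs_of_pos (width_pos n)]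
    exact (div_lt_one (width_pos n)).2 hx |>.le
  rw [curve, Pi.add_apply,
    bumpSeries_eq_of_mem_ball (fun x hx => by rw [cutoff_eq_zero hx, mul_zero]) _ hx,
    bumpSeries_eq_of_mem_ball (fun x hx => cutoff_eq_zero hx) _ hx, hcut]
  field_simp

theorem ball_center_subset_Icc (n : ℕ) : ball (center n) (width n) ⊆ Set.Icc 0 2 := by
  intro x hx
  rw [mem_ball, Real.dist_eq, abs_lt] at hx
  have := center_pos n
  have := center_le_one n
  unfold width at hx
  constructor <;> linarith

theorem not_exists_holder_bound_deriv_of_sq_eq_curve {g : ℝ → ℝ} (hg : Differentiable ℝ g)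
    (hgf : ∀ t, g t ^ 2 = curve t) {α : ℝ} (hα : 0 < α) :
    ¬ ∃ C : ℝ, ∀ s ∈ Set.Icc (0 : ℝ) 2, ∀ t ∈ Set.Icc (0 : ℝ) 2,
      |deriv g s - deriv g t| ≤ C * |s - t| ^ α := by
  rintro ⟨C, hC⟩
  obtain ⟨n, hn⟩ := exists_nat_gt (max (2 / α) C)
  have hnα : 2 / α < n := (le_max_left _ _).trans_lt hn
  have hn0 : n ≠ 0 := by rintro rfl; exact (div_pos two_pos hα).not_gt (by exact_mod_cast hnα)
  set ε := gap n * width n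
  have hε : 0 < ε := mul_pos (gap_pos n) (width_pos n)
  have hεw : |ε| < width n := by
    rw [abs_of_pos hε]; exact mul_lt_of_lt_one_left (width_pos n) (gap_lt_one hn0)
  have hk := div_pos (amplitude_pos n) (width_pos n)
  have hjump := sq_deriv_sub_eq_of_sq_eq hk.ne' hε.ne' hεw hg.differentiableOn
    fun x hx => (hgf x).trans (curve_eq_of_mem_ball hx)
  have hjump_le : amplitude n / width n ≤ |deriv g (center n + ε) - deriv g (center n - ε)| := by
    rw [← abs_of_pos hk, ← sq_le_sq, hjump]
    linarith [sq_nonneg (amplitude n / width n)]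
  have hHol := hC
    _ (ball_center_subset_Icc n (by rwa [mem_ball, Real.dist_eq, add_sub_cancel_left]))
    _ (ball_center_subset_Icc n (by rwa [mem_ball, Real.dist_eq, sub_sub_cancel_left, abs_neg]))
  rw [show center n + ε - (center n - ε) = 2 * ε by ring,
    abs_of_pos (show 0 < 2 * ε by positivity)] at hHol
  exact (mul_rpow_lt_amplitude_div_width hα hnα ((le_max_right _ _).trans_lt hn)).not_ge
    (hjump_le.trans hHol)

end NoC1AlphaLift

end

/-- There is a nonnegative `C^∞`-function `f : ℝ → ℝ` (a smooth curve in the orbit space of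
the representation of `ℤ/2` on `ℝ` by `x ↦ -x`) which, for every `α ∈ (0,1]`, admits no
differentiable square root `g` (i.e. `g ^ 2 = f`) whose derivative is locally `α`-Hölder
continuous; that is, `f` admits no lift of class `C^{1,α}` for any `α > 0`. -/
theorem no_C1alpha_lift :
    ∃ f : ℝ → ℝ, ContDiff ℝ (⊤ : ℕ∞) f ∧ (∀ t, 0 ≤ f t) ∧
      ∀ α : ℝ, 0 < α → α ≤ 1 →
        ¬ ∃ g : ℝ → ℝ, Differentiable ℝ g ∧ (∀ t, g t ^ 2 = f t) ∧
          ∀ K : Set ℝ, IsCompact K → ∃ C : ℝ, ∀ s ∈ K, ∀ t ∈ K,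
            |deriv g s - deriv g t| ≤ C * |s - t| ^ α := by
  refine ⟨NoC1AlphaLift.curve, NoC1AlphaLift.contDiff_curve, NoC1AlphaLift.curve_nonneg, ?_⟩
  rintro α hα - ⟨g, hg, hgf, hHol⟩
  exact NoC1AlphaLift.not_exists_holder_bound_deriv_of_sq_eq_curve hg hgf hα
    (hHol (Set.Icc 0 2) isCompact_Icc)
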